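/- Let k ≥ 1. For C = (c_{ij}) ∈ M_{k×k}(L) write h(C) = τ_k·σ(C) − C·τ_k, and define S = {C ∈ M_{k×k}(L) : h(C)_{k,1} ∈ t𝒪_L and h(C)_{ij} ∈ 𝒪_L for all (i,j)}. Then S is an additive subgroup of M_{k×k}(L) containing M_{k×k}(𝒪_L), and there is a bijection of sets between the quotient group S / M_{k×k}(𝒪_L) and the product (t^{−1}𝒪_L/𝒪_L)^{k−1} × (𝔽_{p^k}((t)) / 𝔽_{p^k}[[t]])^k, where 𝔽_{p^k} = {a ∈ κ̄ : a^{p^k} = a}. -/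

import Mathlib

noncomputable section

/-- `κ̄`: an algebraic closure of `𝔽_p`. -/
abbrev Kb (p : ℕ) [Fact p.Prime] := AlgebraicClosure (ZMod p)

/-- `L = κ̄((t))`: formal Laurent series over `κ̄`. -/
abbrev Lp (p : ℕ) [Fact p.Prime] := LaurentSeries (Kb p)

/-- `σ`: the coefficientwise Frobenius `σ(Σ aᵢ tⁱ) = Σ aᵢ^p tⁱ` on `L = κ̄((t))`. -/
def frob (p : ℕ) [Fact p.Prime] (c : Lp p) : Lp p where
  coeff := fun i => (c.coeff i) ^ p
  isPWO_support' := Set.IsPWO.mono c.isPWO_support' (by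
    intro i hi
    simp only [Function.mem_support] at hi ⊢
    intro h
    exact hi (by rw [h]; exact zero_pow (Fact.out : p.Prime).ne_zero))

/-- The uniformizer `t` of `κ̄((t))`. -/
def tt (p : ℕ) [Fact p.Prime] : Lp p := HahnSeries.single (1 : ℤ) (1 : Kb p)

/-- The valuation ring `𝒪_L = κ̄[[t]]` as an additive subgroup of `L = κ̄((t))`. -/
def OL (p : ℕ) [Fact p.Prime] : AddSubgroup (Lp p) where
  carrier := {c | ∀ i : ℤ, i < 0 → c.coeff i = 0}
  add_mem' := by
    intro a b ha hb i hi
    simp [ha i hi, hb i hi]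
  zero_mem' := by intro i hi; simp
  neg_mem' := by intro a ha i hi; simp [ha i hi]

/-- `M_{k×k}(𝒪_L)` as an additive subgroup of `M_{k×k}(L)`. -/
def MO (p : ℕ) [Fact p.Prime] (k : ℕ) : AddSubgroup (Matrix (Fin k) (Fin k) (Lp p)) where
  carrier := {C | ∀ i j, C i j ∈ OL p}
  add_mem' := by
    intro a b ha hb i j
    exact add_mem (ha i j) (hb i j)
  zero_mem' := by intro i j; exact zero_mem _
  neg_mem' := by intro a ha i j; exact neg_mem (ha i j)

/-- The canonical superbasic element `τ_r`: the `r×r` matrix with `t` in position `(r,1)`,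
`1` on the superdiagonal, and `0` elsewhere (1-indexed); `τ_1 = (t)`. -/
def tau (p : ℕ) [Fact p.Prime] (r : ℕ) : Matrix (Fin r) (Fin r) (Lp p) :=
  Matrix.of fun i j =>
    if (i : ℕ) + 1 = (j : ℕ) then 1 else if (i : ℕ) = r - 1 ∧ (j : ℕ) = 0 then tt p else 0

/-!
Read row `a` of `C` as the series `∑_b C_{a,b} t^{b/k}` and write `c(a, N)` for its coefficient
of `t^{N/k}`. Left multiplication by `τ_k` moves every row up one step (the first row comes back
at the bottom multiplied by `t = (t^{1/k})^k`), right multiplication by `τ_k` multiplies each row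
by `t^{1/k}`. So `C ∈ S` says exactly that, at negative indices, `c(a, N - 1) = c(a + 1, N)^p`
and `c(k - 1, N - 1) = c(0, N - k)^p`, while `C ∈ M_k(𝒪_L)` says that `c` vanishes at negative
indices. Following these relations, every negative coefficient is a Frobenius power either of a
negative coefficient of the last row, which the wrap-around forces to be fixed by `σ^k`, or of
the `t⁻¹`-coefficient of the last entry of one of the first `k - 1` rows; conversely these values
can be prescribed freely. They are the coordinates of the bijection.
-/

def QuotientAddGroup.imageMkEquivImage {G Y : Type*} [AddCommGroup G] [AddCommGroup Y]
    (S H : AddSubgroup G) (f : G →+ Y) (hH : H ≤ f.ker) (hS : ∀ x ∈ S, f x = 0 → x ∈ H) :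
    (QuotientAddGroup.mk '' (S : Set G) : Set (G ⧸ H)) ≃ f '' S := by
  let F := QuotientAddGroup.lift H f hH
  have hinj : Set.InjOn F (QuotientAddGroup.mk '' (S : Set G)) := by
    rintro _ ⟨x, hx, rfl⟩ _ ⟨y, hy, rfl⟩ hxy
    rw [QuotientAddGroup.eq_iff_sub_mem]
    refine hS _ (sub_mem hx hy) ?_
    simpa [F, sub_eq_zero] using hxy
  have himage : F '' (QuotientAddGroup.mk '' (S : Set G)) = f '' S := by
    rw [Set.image_image]
    rfl
  exact (hinj.bijOn_image.equiv F).trans (Equiv.setCongr himage)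

section Monoid

variable {R : Type*} [Monoid R] {p k : ℕ}

variable (p k) in
def IsFrobChain (g : ℕ → ℤ → R) : Prop :=
  (∀ a N, a + 1 < k → N < 0 → g a (N - 1) = g (a + 1) N ^ p) ∧
    ∀ N ≤ 0, g (k - 1) (N - 1) = g 0 (N - k) ^ p

variable {g : ℕ → ℤ → R}

theorem IsFrobChain.eq_pow (hg : IsFrobChain p k g) :
    ∀ j a (N : ℤ), a + j < k → N + j < 0 → g a N = g (a + j) (N + j) ^ p ^ j := by
  intro j
  induction j with
  | zero => simp
  | succ j ih =>
    intro a N ha hN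
    have hstep := hg.1 a (N + 1) (by omega) (by omega)
    rw [add_sub_cancel_right] at hstep
    rw [hstep, ih (a + 1) (N + 1) (by omega) (by omega), ← pow_mul, ← pow_succ]
    congr 2 <;> push_cast <;> ring

theorem IsFrobChain.pow_eq_self (hg : IsFrobChain p k g) (hk : 0 < k) {N : ℤ} (hN : N < 0) :
    g (k - 1) N ^ p ^ k = g (k - 1) N := by
  have hwrap := hg.2 (N + 1) (by omega)
  have hclimb := hg.eq_pow (k - 1) 0 (N + 1 - k) (by omega) (by omega)
  rw [add_sub_cancel_right] at hwrap
  rw [zero_add, show N + 1 - k + ((k - 1 : ℕ) : ℤ) = N by omega] at hclimb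
  conv_rhs => rw [hwrap, hclimb, ← pow_mul, ← pow_succ, Nat.sub_add_cancel hk]

theorem IsFrobChain.congr {g' : ℕ → ℤ → R} (hg : IsFrobChain p k g) (hk : 0 < k)
    (h : ∀ a < k, g a = g' a) : IsFrobChain p k g' := by
  refine ⟨fun a N ha hN => ?_, fun N hN => ?_⟩
  · rw [← h a (by omega), ← h (a + 1) ha, hg.1 a N ha hN]
  · rw [← h (k - 1) (by omega), ← h 0 hk, hg.2 N hN]

/-- The chain through `(a, N)` reaches the last row at index `N + (k - 1 - a)`; if that index is
not negative, the chain meets index `-1` in row `a + (-N - 1)` before. -/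
def frobChainOfBoundary (p k : ℕ) (Y : ℤ → R) (α : ℕ → R) (a : ℕ) (N : ℤ) : R :=
  if N + (k - 1 - a : ℕ) < 0 then Y (N + (k - 1 - a : ℕ)) ^ p ^ (k - 1 - a)
  else α (a + (-N - 1).toNat) ^ p ^ (-N - 1).toNat

variable {Y : ℤ → R} {α : ℕ → R}

theorem frobChainOfBoundary_last {N : ℤ} (hN : N < 0) :
    frobChainOfBoundary p k Y α (k - 1) N = Y N := by
  simp [frobChainOfBoundary, hN]

theorem frobChainOfBoundary_neg_one {d : ℕ} (hd : d + 1 < k) :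
    frobChainOfBoundary p k Y α d (-1) = α d := by
  rw [frobChainOfBoundary, if_neg (by omega)]
  simp

theorem isFrobChain_frobChainOfBoundary (hk : 0 < k) (hY : ∀ N < 0, Y N ^ p ^ k = Y N) :
    IsFrobChain p k (frobChainOfBoundary p k Y α) := by
  refine ⟨fun a N ha hN => ?_, fun N hN => ?_⟩
  · have hj : k - 1 - a = (k - 1 - (a + 1)) + 1 := by omega
    unfold frobChainOfBoundary
    split_ifs with h1 h2 h2
    · rw [← pow_mul, ← pow_succ, ← hj, show N - 1 + ((k - 1 - a : ℕ) : ℤ)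
        = N + ((k - 1 - (a + 1) : ℕ) : ℤ) by omega]
    · omega
    · omega
    · rw [← pow_mul, ← pow_succ, show (-(N - 1) - 1).toNat = (-N - 1).toNat + 1 by omega,
        show a + ((-N - 1).toNat + 1) = a + 1 + (-N - 1).toNat by omega]
  · unfold frobChainOfBoundary
    rw [if_pos (by omega), if_pos (by omega), ← pow_mul, ← pow_succ,
      show k - 1 - 0 + 1 = k by omega, show N - k + ((k - 1 - 0 : ℕ) : ℤ) = N - 1 by omega,
      hY _ (by omega)]
    simp

end Monoid

section MonoidWithZero

variable {R : Type*} [MonoidWithZero R] {p k : ℕ} {g : ℕ → ℤ → R}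

theorem isFrobChain_of_eq_zero (hp : p ≠ 0) (hk : 0 < k) (hg : ∀ a, ∀ N < 0, g a N = 0) :
    IsFrobChain p k g :=
  ⟨fun a N _ hN => by rw [hg _ _ (by omega), hg _ _ hN, zero_pow hp],
    fun N hN => by rw [hg _ _ (by omega), hg _ _ (by omega), zero_pow hp]⟩

theorem IsFrobChain.eq_zero (hg : IsFrobChain p k g) (hp : p ≠ 0)
    (hlast : ∀ N < 0, g (k - 1) N = 0) (hcol : ∀ d, d + 1 < k → g d (-1) = 0)
    {a : ℕ} (ha : a < k) {N : ℤ} (hN : N < 0) : g a N = 0 := by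
  by_cases hdeep : N + (k - 1 - a : ℕ) < 0
  · rw [hg.eq_pow (k - 1 - a) a N (by omega) hdeep, Nat.add_sub_cancel' (by omega),
      hlast _ hdeep, zero_pow (pow_ne_zero _ hp)]
  · rw [hg.eq_pow (-N - 1).toNat a N (by omega) (by omega),
      show N + ((-N - 1).toNat : ℤ) = -1 by omega, hcol _ (by omega),
      zero_pow (pow_ne_zero _ hp)]

theorem bddBelow_support_frobChainOfBoundary {Y : ℤ → R} {α : ℕ → R} (hp : p ≠ 0)
    (hY : BddBelow Y.support) (a : ℕ) :
    BddBelow (frobChainOfBoundary p k Y α a).support := by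
  obtain ⟨L, hL⟩ := hY
  refine ⟨min (L - k) (-k), fun N hN => ?_⟩
  simp only [Function.mem_support, frobChainOfBoundary] at hN
  split_ifs at hN with hdeep
  · have := hL (ne_zero_pow (pow_ne_zero _ hp) hN)
    omega
  · omega

end MonoidWithZero

namespace Superbasic

variable {p : ℕ} [Fact p.Prime] {k : ℕ} [NeZero k]

theorem frob_add (x y : Lp p) : frob p (x + y) = frob p x + frob p y := by
  ext m
  simp [frob, add_pow_char]

theorem tt_mul_coeff (c : Lp p) (m : ℤ) : (tt p * c).coeff m = c.coeff (m - 1) := by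
  simpa [tt] using HahnSeries.coeff_single_mul_add (r := (1 : Kb p)) (x := c) (a := m - 1)
    (b := 1)

theorem mul_tt_coeff (c : Lp p) (m : ℤ) : (c * tt p).coeff m = c.coeff (m - 1) := by
  simpa [tt] using HahnSeries.coeff_mul_single_add (r := (1 : Kb p)) (x := c) (a := m - 1)
    (b := 1)

theorem toNat_emod_lt (N : ℤ) : (N % k).toNat < k := by
  have := Int.emod_lt_of_pos N (b := k) (by exact_mod_cast NeZero.pos k)
  have := NeZero.pos k
  omega

variable (k) in
abbrev lastRow : Fin k := ⟨k - 1, Nat.sub_one_lt (NeZero.ne k)⟩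

/-- The coefficient of `t^{N/k}` in `∑_b v_b t^{b/k}`, i.e. of `t^m` in `v_b` for `N = b + k m`. -/
def rowCoeff (v : Fin k → Lp p) (N : ℤ) : Kb p :=
  (v ⟨(N % k).toNat, toNat_emod_lt N⟩).coeff (N / k)

theorem rowCoeff_add_mul (v : Fin k → Lp p) (b : Fin k) (m : ℤ) :
    rowCoeff v (b + k * m) = (v b).coeff m := by
  have hk : (0 : ℤ) < k := by exact_mod_cast NeZero.pos k
  have hb : (b : ℤ) < k := by exact_mod_cast b.isLt
  have hmod : ((b : ℤ) + k * m) % k = b := by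
    rw [Int.add_mul_emod_self_left, Int.emod_eq_of_lt (by positivity) hb]
  have hdiv : ((b : ℤ) + k * m) / k = m := by
    rw [Int.add_mul_ediv_left _ _ hk.ne', Int.ediv_eq_zero_of_lt (by positivity) hb, zero_add]
  simp only [rowCoeff, hmod, hdiv, Int.toNat_natCast]

theorem exists_eq_add_mul (N : ℤ) : ∃ (b : Fin k) (m : ℤ), N = b + k * m := by
  have hk : (0 : ℤ) < k := by exact_mod_cast NeZero.pos k
  refine ⟨⟨(N % k).toNat, toNat_emod_lt N⟩, N / k, ?_⟩
  simp only [Int.toNat_of_nonneg (Int.emod_nonneg N hk.ne'), Int.emod_add_mul_ediv]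

theorem rowCoeff_sub (v w : Fin k → Lp p) (N : ℤ) :
    rowCoeff (v - w) N = rowCoeff v N - rowCoeff w N := by
  simp [rowCoeff]

theorem rowCoeff_sub_row (A B : Matrix (Fin k) (Fin k) (Lp p)) (i : Fin k) (N : ℤ) :
    rowCoeff ((A - B) i) N = rowCoeff (A i) N - rowCoeff (B i) N := by
  simp [rowCoeff]

theorem forall_mem_OL_iff_rowCoeff (v : Fin k → Lp p) :
    (∀ b, v b ∈ OL p) ↔ ∀ N < 0, rowCoeff v N = 0 := by
  have hk : (0 : ℤ) < k := by exact_mod_cast NeZero.pos k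
  constructor
  · intro hv N hN
    obtain ⟨b, m, rfl⟩ := exists_eq_add_mul (k := k) N
    rw [rowCoeff_add_mul]
    exact hv b m (by nlinarith [Int.natCast_nonneg (b : ℕ)])
  · intro hv b m hm
    have hb : (b : ℤ) < k := by exact_mod_cast b.isLt
    rw [← rowCoeff_add_mul]
    exact hv _ (by nlinarith)

theorem forall_mk_eq_mk_iff_rowCoeff (v w : Fin k → Lp p) :
    (∀ b, (QuotientAddGroup.mk (v b) : Lp p ⧸ OL p) = QuotientAddGroup.mk (w b)) ↔
      ∀ N < 0, rowCoeff v N = rowCoeff w N := by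
  simp_rw [QuotientAddGroup.eq_iff_sub_mem, ← sub_eq_zero (a := rowCoeff v _), ← rowCoeff_sub]
  exact forall_mem_OL_iff_rowCoeff (v - w)

theorem bddBelow_support_rowCoeff (v : Fin k → Lp p) : BddBelow (rowCoeff v).support := by
  obtain ⟨L, hL⟩ := (Set.finite_range fun b => (v b).order).bddBelow
  refine ⟨k * L, fun N hN => ?_⟩
  obtain ⟨b, m, rfl⟩ := exists_eq_add_mul (k := k) N
  rw [Function.mem_support, rowCoeff_add_mul] at hN
  have hm : L ≤ m := (hL ⟨b, rfl⟩).trans (HahnSeries.order_le_of_coeff_ne_zero hN)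
  have : (k : ℤ) * L ≤ k * m := mul_le_mul_of_nonneg_left hm (by positivity)
  have : (0 : ℤ) ≤ b := by positivity
  change _ ≤ _
  linarith

theorem bddBelow_support_comp_add_mul {M : Type*} [Zero M] {U : ℤ → M}
    (hU : BddBelow U.support) (b : Fin k) : BddBelow (fun m : ℤ => U (b + k * m)).support := by
  obtain ⟨L, hL⟩ := hU
  have hb : (b : ℤ) < k := by exact_mod_cast b.isLt
  have hk : (1 : ℤ) ≤ k := by exact_mod_cast NeZero.one_le
  refine ⟨min 0 (L - k), fun m hm => ?_⟩
  have := hL hm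
  by_cases h : m < 0
  · have : (k : ℤ) * m ≤ m := by nlinarith
    omega
  · omega

def ofRowCoeff (U : ℤ → Kb p) (hU : BddBelow U.support) : Fin k → Lp p := fun b =>
  HahnSeries.ofSuppBddBelow (fun m => U (b + k * m)) (bddBelow_support_comp_add_mul hU b)

theorem rowCoeff_ofRowCoeff (U : ℤ → Kb p) (hU : BddBelow U.support) (N : ℤ) :
    rowCoeff (ofRowCoeff (k := k) U hU) N = U N := by
  obtain ⟨b, m, rfl⟩ := exists_eq_add_mul (k := k) N
  rw [rowCoeff_add_mul]
  rfl

theorem tau_mul_row_of_lt (M : Matrix (Fin k) (Fin k) (Lp p)) {a : ℕ} (ha : a + 1 < k) :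
    (tau p k * M) ⟨a, by omega⟩ = M ⟨a + 1, ha⟩ := by
  funext j
  rw [Matrix.mul_apply, Finset.sum_eq_single ⟨a + 1, ha⟩]
  · simp [tau]
  · intro l _ hl
    have h1 : a + 1 ≠ l := fun h => hl (Fin.ext h.symm)
    simp [tau, h1, show a ≠ k - 1 by omega]
  · simp

theorem tau_mul_row_last (M : Matrix (Fin k) (Fin k) (Lp p)) :
    (tau p k * M) (lastRow k) = fun j => tt p * M 0 j := by
  funext j
  rw [Matrix.mul_apply, Finset.sum_eq_single 0]
  · simp [tau]
  · intro l _ hl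
    simp [tau, hl, show k - 1 + 1 ≠ l by omega]
  · simp

theorem mul_tau_apply_zero (M : Matrix (Fin k) (Fin k) (Lp p)) (i : Fin k) :
    (M * tau p k) i 0 = M i (lastRow k) * tt p := by
  rw [Matrix.mul_apply, Finset.sum_eq_single (lastRow k)]
  · simp [tau]
  · intro l _ hl
    have h0 : (l : ℕ) ≠ k - 1 := fun h => hl (Fin.ext h)
    simp [tau, h0]
  · simp

theorem mul_tau_apply_succ (M : Matrix (Fin k) (Fin k) (Lp p)) (i : Fin k) {b : ℕ}
    (hb : b + 1 < k) : (M * tau p k) i ⟨b + 1, hb⟩ = M i ⟨b, by omega⟩ := by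
  rw [Matrix.mul_apply, Finset.sum_eq_single ⟨b, by omega⟩]
  · simp [tau]
  · intro l _ hl
    have h1 : (l : ℕ) ≠ b := fun h => hl (Fin.ext h)
    simp [tau, h1]
  · simp

theorem rowCoeff_tt_mul (v : Fin k → Lp p) (N : ℤ) :
    rowCoeff (fun j => tt p * v j) N = rowCoeff v (N - k) := by
  obtain ⟨b, m, rfl⟩ := exists_eq_add_mul (k := k) N
  rw [rowCoeff_add_mul, tt_mul_coeff, ← rowCoeff_add_mul]
  ring_nf

theorem rowCoeff_mul_tau (M : Matrix (Fin k) (Fin k) (Lp p)) (i : Fin k) (N : ℤ) :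
    rowCoeff ((M * tau p k) i) N = rowCoeff (M i) (N - 1) := by
  obtain ⟨⟨b, hb⟩, m, rfl⟩ := exists_eq_add_mul (k := k) N
  rw [rowCoeff_add_mul]
  rcases b with _ | b
  · rw [Fin.mk_zero', mul_tau_apply_zero, mul_tt_coeff, ← rowCoeff_add_mul]
    congr 1
    simp only [Fin.val_zero, Nat.cast_zero, Nat.cast_sub (NeZero.one_le : 1 ≤ k), Nat.cast_one]
    ring
  · rw [mul_tau_apply_succ, ← rowCoeff_add_mul]
    congr 1
    push_cast
    ring

def frobCommutator (C : Matrix (Fin k) (Fin k) (Lp p)) : Matrix (Fin k) (Fin k) (Lp p) :=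
  tau p k * C.map (frob p) - C * tau p k

/-- Rows are indexed by `ℕ` so that the chain lemmas need no `Fin` arithmetic. -/
def coeffGrid (C : Matrix (Fin k) (Fin k) (Lp p)) (a : ℕ) (N : ℤ) : Kb p :=
  if h : a < k then rowCoeff (C ⟨a, h⟩) N else 0

theorem coeffGrid_of_lt (C : Matrix (Fin k) (Fin k) (Lp p)) {a : ℕ} (ha : a < k) :
    coeffGrid C a = rowCoeff (C ⟨a, ha⟩) :=
  funext fun _ => dif_pos ha

theorem coeffGrid_add (C D : Matrix (Fin k) (Fin k) (Lp p)) (a : ℕ) (N : ℤ) :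
    coeffGrid (C + D) a N = coeffGrid C a N + coeffGrid D a N := by
  unfold coeffGrid
  split_ifs <;> simp [rowCoeff]

theorem rowCoeff_frobCommutator_of_lt (C : Matrix (Fin k) (Fin k) (Lp p)) {a : ℕ}
    (ha : a + 1 < k) (N : ℤ) :
    rowCoeff (frobCommutator C ⟨a, by omega⟩) N =
      coeffGrid C (a + 1) N ^ p - coeffGrid C a (N - 1) := by
  rw [frobCommutator, rowCoeff_sub_row, tau_mul_row_of_lt _ ha, rowCoeff_mul_tau,
    coeffGrid_of_lt C ha, coeffGrid_of_lt C (by omega)]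
  rfl

theorem rowCoeff_frobCommutator_last (C : Matrix (Fin k) (Fin k) (Lp p)) (N : ℤ) :
    rowCoeff (frobCommutator C (lastRow k)) N =
      coeffGrid C 0 (N - k) ^ p - coeffGrid C (k - 1) (N - 1) := by
  rw [frobCommutator, rowCoeff_sub_row, tau_mul_row_last, rowCoeff_tt_mul, rowCoeff_mul_tau,
    coeffGrid_of_lt C (NeZero.pos k), coeffGrid_of_lt C (Nat.sub_one_lt (NeZero.ne k))]
  rfl

theorem mem_MO_iff (C : Matrix (Fin k) (Fin k) (Lp p)) :
    C ∈ MO p k ↔ ∀ a < k, ∀ N < 0, coeffGrid C a N = 0 := by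
  refine ⟨fun hC a ha => ?_, fun hC i => ?_⟩
  · rw [coeffGrid_of_lt C ha]
    exact (forall_mem_OL_iff_rowCoeff _).1 (hC ⟨a, ha⟩)
  · rw [forall_mem_OL_iff_rowCoeff, ← coeffGrid_of_lt C i.isLt]
    exact hC i i.isLt

variable (p k) in
def frobCommutatorHom : Matrix (Fin k) (Fin k) (Lp p) →+ Matrix (Fin k) (Fin k) (Lp p) where
  toFun := frobCommutator
  map_zero' := by
    have : (0 : Matrix (Fin k) (Fin k) (Lp p)).map (frob p) = 0 := by
      ext
      simp [frob, (Fact.out : p.Prime).ne_zero]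
    simp [frobCommutator, this]
  map_add' C D := by
    simp only [frobCommutator, Matrix.map_add _ frob_add, mul_add, add_mul]
    abel

variable (p k) in
def cornerLattice : AddSubgroup (Matrix (Fin k) (Fin k) (Lp p)) where
  carrier := {D | (∀ i j, D i j ∈ OL p) ∧ ∀ i : ℤ, i < 1 → (D (lastRow k) 0).coeff i = 0}
  add_mem' hD hE := ⟨fun i j => add_mem (hD.1 i j) (hE.1 i j),
    fun i hi => by simp [hD.2 i hi, hE.2 i hi]⟩
  zero_mem' := ⟨fun _ _ => zero_mem _, fun _ _ => rfl⟩
  neg_mem' hD := ⟨fun i j => neg_mem (hD.1 i j), fun i hi => by simp [hD.2 i hi]⟩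

variable (p k) in
def commutatorLattice : AddSubgroup (Matrix (Fin k) (Fin k) (Lp p)) :=
  (cornerLattice p k).comap (frobCommutatorHom p k)

theorem mem_cornerLattice_iff (D : Matrix (Fin k) (Fin k) (Lp p)) :
    D ∈ cornerLattice p k ↔
      (∀ a, ∀ N < 0, rowCoeff (D a) N = 0) ∧ rowCoeff (D (lastRow k)) 0 = 0 := by
  have h0 : rowCoeff (D (lastRow k)) 0 = (D (lastRow k) 0).coeff 0 := by
    simpa using rowCoeff_add_mul (D (lastRow k)) 0 0
  simp_rw [← forall_mem_OL_iff_rowCoeff, h0]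
  refine ⟨fun hD => ⟨hD.1, hD.2 0 one_pos⟩, fun hD => ⟨hD.1, fun i hi => ?_⟩⟩
  rcases (show i ≤ 0 by omega).lt_or_eq with hi | rfl
  · exact hD.1 _ _ _ hi
  · exact hD.2

theorem mem_commutatorLattice_iff (C : Matrix (Fin k) (Fin k) (Lp p)) :
    C ∈ commutatorLattice p k ↔ IsFrobChain p k (coeffGrid C) := by
  change frobCommutator C ∈ cornerLattice p k ↔ _
  rw [mem_cornerLattice_iff]
  constructor
  · rintro ⟨hrows, hcorner⟩
    refine ⟨fun a N ha hN => ?_, fun N hN => ?_⟩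
    · have h := hrows ⟨a, by omega⟩ N hN
      rw [rowCoeff_frobCommutator_of_lt _ ha] at h
      exact (sub_eq_zero.1 h).symm
    · have h : rowCoeff (frobCommutator C (lastRow k)) N = 0 := by
        rcases hN.lt_or_eq with hN | rfl
        exacts [hrows _ N hN, hcorner]
      rw [rowCoeff_frobCommutator_last] at h
      exact (sub_eq_zero.1 h).symm
  · intro hC
    refine ⟨fun ⟨a, ha⟩ N hN => ?_, ?_⟩
    · by_cases h : a + 1 < k
      · rw [rowCoeff_frobCommutator_of_lt _ h, ← hC.1 a N h hN, sub_self]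
      · obtain rfl : a = k - 1 := by omega
        rw [rowCoeff_frobCommutator_last, ← hC.2 N hN.le, sub_self]
    · rw [rowCoeff_frobCommutator_last, ← hC.2 0 le_rfl, sub_self]

theorem MO_le_commutatorLattice : MO p k ≤ commutatorLattice p k := by
  intro C hC
  rw [mem_commutatorLattice_iff]
  refine isFrobChain_of_eq_zero (Fact.out : p.Prime).ne_zero (NeZero.pos k) fun a N hN => ?_
  by_cases ha : a < k
  · exact (mem_MO_iff C).1 hC a ha N hN
  · simp [coeffGrid, ha]

variable (p) in
def negOneClasses : Set (Lp p ⧸ OL p) :=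
  QuotientAddGroup.mk '' {c | ∀ i : ℤ, i < -1 → c.coeff i = 0}

variable (p k) in
def fixedClasses : Set (Lp p ⧸ OL p) :=
  QuotientAddGroup.mk '' {c | ∀ i : ℤ, c.coeff i ^ p ^ k = c.coeff i}

variable (p k) in
/-- `coeffGrid C d (-1)` is the `t⁻¹`-coefficient of `C_{d,k-1}`. -/
def invariants :
    Matrix (Fin k) (Fin k) (Lp p) →+ (Fin (k - 1) → Lp p ⧸ OL p) × (Fin k → Lp p ⧸ OL p) where
  toFun C := (fun d => QuotientAddGroup.mk (HahnSeries.single (-1) (coeffGrid C d (-1))),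
    fun b => QuotientAddGroup.mk (C (lastRow k) b))
  map_zero' := by
    ext <;> simp [coeffGrid, rowCoeff]
  map_add' C D := by
    ext <;> simp [coeffGrid_add]

theorem MO_le_ker_invariants : MO p k ≤ (invariants p k).ker := by
  intro C hC
  rw [AddMonoidHom.mem_ker]
  ext d
  · simp [invariants, (mem_MO_iff C).1 hC d (by omega) (-1) (by norm_num)]
  · exact (QuotientAddGroup.eq_zero_iff _).2 (hC _ _)

theorem mem_MO_of_invariants_eq_zero {C : Matrix (Fin k) (Fin k) (Lp p)}
    (hC : C ∈ commutatorLattice p k) (h0 : invariants p k C = 0) : C ∈ MO p k := by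
  have hcol : ∀ d, d + 1 < k → coeffGrid C d (-1) = 0 := by
    intro d hd
    have h := (QuotientAddGroup.eq_zero_iff _).1 (congrArg (fun y => y.1 ⟨d, by omega⟩) h0)
    simpa using h (-1) (by norm_num)
  have hlast : ∀ N < 0, coeffGrid C (k - 1) N = 0 := by
    have hrow b := (QuotientAddGroup.eq_zero_iff _).1 (congrArg (fun y => y.2 b) h0)
    rw [coeffGrid_of_lt C (Nat.sub_one_lt (NeZero.ne k))]
    exact (forall_mem_OL_iff_rowCoeff _).1 hrow
  rw [mem_MO_iff]
  exact fun a ha N hN => ((mem_commutatorLattice_iff C).1 hC).eq_zero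
    (Fact.out : p.Prime).ne_zero hlast hcol ha hN

theorem mk_single_mem_negOneClasses (x : Kb p) :
    (QuotientAddGroup.mk (HahnSeries.single (-1 : ℤ) x) : Lp p ⧸ OL p) ∈ negOneClasses p :=
  ⟨_, fun i hi => by simp [hi.ne], rfl⟩

theorem mk_single_coeff_neg_one {c : Lp p} (hc : ∀ i : ℤ, i < -1 → c.coeff i = 0) :
    (QuotientAddGroup.mk (HahnSeries.single (-1 : ℤ) (c.coeff (-1))) : Lp p ⧸ OL p) =
      QuotientAddGroup.mk c := by
  rw [QuotientAddGroup.eq_iff_sub_mem]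
  intro i hi
  rcases (show i ≤ -1 by omega).lt_or_eq with hi | rfl
  · simp [hi.ne, hc i hi]
  · simp

theorem mk_lastRow_mem_fixedClasses {C : Matrix (Fin k) (Fin k) (Lp p)}
    (hC : C ∈ commutatorLattice p k) (b : Fin k) :
    (QuotientAddGroup.mk (C (lastRow k) b) : Lp p ⧸ OL p) ∈ fixedClasses p k := by
  have hchain := (mem_commutatorLattice_iff C).1 hC
  refine ⟨HahnSeries.truncLT 0 (C (lastRow k) b), fun i => ?_, ?_⟩
  · rcases lt_or_ge i 0 with hi | hi
    · have hN : (b : ℤ) + k * i < 0 := by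
        have : (b : ℤ) < k := by exact_mod_cast b.isLt
        nlinarith
      have := hchain.pow_eq_self (NeZero.pos k) hN
      rwa [coeffGrid_of_lt C (Nat.sub_one_lt (NeZero.ne k)), rowCoeff_add_mul,
        ← HahnSeries.coeff_truncLT_of_lt hi] at this
    · simp [HahnSeries.coeff_truncLT_of_le hi, (Fact.out : p.Prime).ne_zero]
  · rw [QuotientAddGroup.eq_iff_sub_mem]
    intro i hi
    simp [HahnSeries.coeff_truncLT_of_lt hi]

theorem exists_mem_commutatorLattice (α : Fin (k - 1) → Kb p) (c : Fin k → Lp p)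
    (hc : ∀ b i, (c b).coeff i ^ p ^ k = (c b).coeff i) :
    ∃ C ∈ commutatorLattice p k, (∀ d : Fin (k - 1), coeffGrid C d (-1) = α d) ∧
      ∀ N < 0, rowCoeff (C (lastRow k)) N = rowCoeff c N := by
  have hk := NeZero.pos k
  let αN : ℕ → Kb p := fun d => if h : d + 1 < k then α ⟨d, by omega⟩ else 0
  let G := frobChainOfBoundary p k (rowCoeff c) αN
  have hG a : BddBelow (G a).support := bddBelow_support_frobChainOfBoundary
    (Fact.out : p.Prime).ne_zero (bddBelow_support_rowCoeff c) a
  let C : Matrix (Fin k) (Fin k) (Lp p) := Matrix.of fun a : Fin k => ofRowCoeff (G a) (hG a)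
  have hCG : ∀ a < k, coeffGrid C a = G a := fun a ha => by
    rw [coeffGrid_of_lt C ha]
    exact funext (rowCoeff_ofRowCoeff (G a) (hG a))
  have hfix : ∀ N < 0, rowCoeff c N ^ p ^ k = rowCoeff c N := fun N _ => by
    obtain ⟨b, m, rfl⟩ := exists_eq_add_mul (k := k) N
    rw [rowCoeff_add_mul]
    exact hc b m
  refine ⟨C, (mem_commutatorLattice_iff C).2 ((isFrobChain_frobChainOfBoundary hk hfix).congr hk
    fun a ha => (hCG a ha).symm), fun d => ?_, fun N hN => ?_⟩
  · rw [hCG d (by omega)]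
    exact (frobChainOfBoundary_neg_one (by omega)).trans (dif_pos (by omega))
  · rw [← coeffGrid_of_lt C (Nat.sub_one_lt (NeZero.ne k)), hCG _ (by omega)]
    exact frobChainOfBoundary_last hN

theorem image_invariants :
    invariants p k '' (commutatorLattice p k) =
      {y | (∀ d, y.1 d ∈ negOneClasses p) ∧ ∀ b, y.2 b ∈ fixedClasses p k} := by
  ext y
  constructor
  · rintro ⟨C, hC, rfl⟩
    exact ⟨fun d => mk_single_mem_negOneClasses _, mk_lastRow_mem_fixedClasses hC⟩
  · rintro ⟨hA, hB⟩
    choose α hα hαmk using hA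
    choose c hc hcmk using hB
    obtain ⟨C, hC, hCα, hCc⟩ := exists_mem_commutatorLattice (fun d => (α d).coeff (-1)) c hc
    refine ⟨C, hC, Prod.ext (funext fun d => ?_)
      (funext fun b => ((forall_mk_eq_mk_iff_rowCoeff _ c).2 hCc b).trans (hcmk b))⟩
    change QuotientAddGroup.mk (HahnSeries.single (-1) (coeffGrid C d (-1))) = y.1 d
    rw [hCα, mk_single_coeff_neg_one (hα d), hαmk]

end Superbasic
open Superbasic in
/-- The equal-block Drinfeld case: for
`S = {C ∈ M_{k×k}(L) : h(C) = τ_k σ(C) − C τ_k has its (k,1) entry in t𝒪_L and all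
entries in 𝒪_L}`, `S` is an additive subgroup of `M_{k×k}(L)` containing `M_{k×k}(𝒪_L)`,
and `S / M_{k×k}(𝒪_L)` is in bijection with
`(t⁻¹𝒪_L/𝒪_L)^{k−1} × (𝔽_{p^k}((t))/𝔽_{p^k}[[t]])^k`, where `𝔽_{p^k} = {a : a^{p^k} = a}`.
(The quotient `𝔽_{p^k}((t))/𝔽_{p^k}[[t]]` is realized as the image of `𝔽_{p^k}((t))` in
`L/𝒪_L`.) -/
theorem stmt_9 (p : ℕ) [Fact p.Prime] (k : ℕ) (hk : 1 ≤ k)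
    (S : Set (Matrix (Fin k) (Fin k) (Lp p)))
    (hS : S = {C |
      (∀ i j, (tau p k * C.map (frob p) - C * tau p k) i j ∈ OL p) ∧
      (∀ i : ℤ, i < 1 →
        ((tau p k * C.map (frob p) - C * tau p k)
          (⟨k - 1, by omega⟩ : Fin k) (⟨0, by omega⟩ : Fin k)).coeff i = 0)}) :
    -- `S` is an additive subgroup of `M_{k×k}(L)` containing `M_{k×k}(𝒪_L)`
    (0 ∈ S) ∧
    (∀ C₁ ∈ S, ∀ C₂ ∈ S, C₁ + C₂ ∈ S) ∧
    (∀ C ∈ S, -C ∈ S) ∧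
    (∀ C, C ∈ MO p k → C ∈ S) ∧
    -- the bijection of sets `S / M_{k×k}(𝒪_L) ≃ (t⁻¹𝒪_L/𝒪_L)^{k−1} × (𝔽_{p^k}((t))/𝔽_{p^k}[[t]])^k`
    Nonempty (
      {x : Matrix (Fin k) (Fin k) (Lp p) ⧸ MO p k // ∃ C ∈ S, QuotientAddGroup.mk C = x} ≃
      ((Fin (k - 1) →
          {x : Lp p ⧸ OL p // ∃ c : Lp p, (∀ i : ℤ, i < -1 → c.coeff i = 0) ∧
            QuotientAddGroup.mk c = x}) ×
        (Fin k →
          {x : Lp p ⧸ OL p // ∃ c : Lp p, (∀ i : ℤ, (c.coeff i) ^ (p ^ k) = c.coeff i) ∧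
            QuotientAddGroup.mk c = x}))) := by
  have : NeZero k := ⟨by omega⟩
  obtain rfl : S = commutatorLattice p k := hS
  refine ⟨zero_mem _, fun _ h₁ _ h₂ => add_mem h₁ h₂, fun _ h => neg_mem h,
    fun _ h => MO_le_commutatorLattice h, ⟨?_⟩⟩
  exact (QuotientAddGroup.imageMkEquivImage _ _ _ MO_le_ker_invariants
      fun _ hC h0 => mem_MO_of_invariants_eq_zero hC h0).trans <|
    (Equiv.setCongr image_invariants).trans <| Equiv.subtypeProdEquivProd.trans <|
      Equiv.prodCongr Equiv.subtypePiEquivPi Equiv.subtypePiEquivPi
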